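/- Let a, b ∈ ℂ with b ≠ 0, and write φ_{a,b}(X) = X·F₁(X)²/F₂(X)² for the rational function with parameters (a,b). Then for every x ∈ ℂ with x ≠ 0 at which all denominators involved are nonzero and φ_{a,b}(1/x) ≠ 0, one has φ_{a/b, 1/b}(x) = 1/φ_{a,b}(1/x). -/

import Mathlib

/-! Under `(a, b) ↦ (a/b, 1/b)` the two factors of `φ` are exchanged up to the
reversal `X ↦ 1/X`, namely `b² F₁^σ(X) = X² F₂(1/X)` and `b² F₂^σ(X) = X² F₁(1/X)`. Hence
`φ^σ(x) = x F₂(1/x)² / F₁(1/x)²`, which is the reciprocal of `φ(1/x) = x⁻¹ F₁(1/x)² / F₂(1/x)²`. -/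

/-- The rational function `φ_{a,b}(x) = x·F₁(x)²/F₂(x)²`, where
`F₁(X) = X² + (2a + 2b + a²)X + 2ab + b²` and
`F₂(X) = (2a+1)X² + (a² + 2ab + 2b)X + b²`. -/
noncomputable def phi (a b x : ℂ) : ℂ :=
  x * (x ^ 2 + (2 * a + 2 * b + a ^ 2) * x + 2 * a * b + b ^ 2) ^ 2
    / ((2 * a + 1) * x ^ 2 + (a ^ 2 + 2 * a * b + 2 * b) * x + b ^ 2) ^ 2

section Factors

variable {K : Type*} [Field K]

def phiNum (a b x : K) : K := x ^ 2 + (2 * a + 2 * b + a ^ 2) * x + 2 * a * b + b ^ 2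

def phiDen (a b x : K) : K := (2 * a + 1) * x ^ 2 + (a ^ 2 + 2 * a * b + 2 * b) * x + b ^ 2

theorem phiNum_sigma {a b : K} (x : K) (hb : b ≠ 0) (hx : x ≠ 0) :
    phiNum (a / b) (1 / b) x = x ^ 2 * phiDen a b (1 / x) / b ^ 2 := by
  unfold phiNum phiDen
  field_simp
  ring

theorem phiDen_sigma {a b : K} (x : K) (hb : b ≠ 0) (hx : x ≠ 0) :
    phiDen (a / b) (1 / b) x = x ^ 2 * phiNum a b (1 / x) / b ^ 2 := by
  unfold phiNum phiDen
  field_simp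
  ring

end Factors

theorem phi_eq (a b x : ℂ) : phi a b x = x * phiNum a b x ^ 2 / phiDen a b x ^ 2 := rfl

theorem phi_ne_zero_iff {a b x : ℂ} :
    phi a b x ≠ 0 ↔ x ≠ 0 ∧ phiNum a b x ≠ 0 ∧ phiDen a b x ≠ 0 := by
  simp only [phi_eq, ne_eq, div_eq_zero_iff, mul_eq_zero, pow_eq_zero_iff two_ne_zero, not_or,
    and_assoc]

theorem phi_transform_sigma_general (a b x : ℂ) (hb : b ≠ 0)
    (hphi : phi a b (1 / x) ≠ 0) :
    phi (a / b) (1 / b) x = 1 / phi a b (1 / x) := by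
  obtain ⟨hx_inv, hNum, hDen⟩ := phi_ne_zero_iff.1 hphi
  have hx := ne_zero_of_one_div_ne_zero hx_inv
  rw [phi_eq, phi_eq, phiNum_sigma x hb hx, phiDen_sigma x hb hx]
  field_simp

/-- For `b ≠ 0` and any `x ≠ 0` at which all denominators involved are nonzero and
`φ_{a,b}(1/x) ≠ 0`, one has `φ_{a/b, 1/b}(x) = 1/φ_{a,b}(1/x)`. -/
theorem phi_transform_sigma (a b x : ℂ) (hb : b ≠ 0) (hx : x ≠ 0)
    (hden₁ : (2 * a + 1) * (1 / x) ^ 2 + (a ^ 2 + 2 * a * b + 2 * b) * (1 / x) + b ^ 2 ≠ 0)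
    (hden₂ : (2 * (a / b) + 1) * x ^ 2
        + ((a / b) ^ 2 + 2 * (a / b) * (1 / b) + 2 * (1 / b)) * x + (1 / b) ^ 2 ≠ 0)
    (hphi : phi a b (1 / x) ≠ 0) :
    phi (a / b) (1 / b) x = 1 / phi a b (1 / x) :=
  phi_transform_sigma_general a b x hb hphi
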